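/- Let T : Ω → B be a map with values in the closed ball of radius R = (|Ω|/ω_N)^{1/N} centered at the origin, such that the trace of T on ∂Ω satisfies ∫_{∂Ω} ⟨tr(T), ν⟩ dH^{N-1} ≥ N|Ω|. Then ∫_{∂Ω} |R(1+δ_Ω)^{1/(p-1)} − ⟨tr(T)(x), ν(x)⟩| dH^{N-1}(x) ≤ N|Ω| [(1+δ_Ω)^{p/(p-1)} − 1]. -/

import Mathlib

open MeasureTheory Set
open scoped RealInnerProductSpace

/-- Integral estimate on the boundary for a map `T` into the ball of radius
`R = (|Ω|/ω_N)^{1/N}` whose trace has outward flux at least `N|Ω|`. -/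
theorem stmt4 {N : ℕ} (hN : 2 ≤ N) (p : ℝ) (hp : 1 < p)
    (Ω : Set (EuclideanSpace ℝ (Fin N)))
    (hopen : IsOpen Ω) (hbdd : Bornology.IsBounded Ω)
    (ω κ R δ : ℝ)
    (hω : ω = (volume (Metric.ball (0 : EuclideanSpace ℝ (Fin N)) 1)).toReal)
    (hκ : κ = N * ω ^ ((1 : ℝ) / N))
    (hR : R = ((volume Ω).toReal / ω) ^ ((1 : ℝ) / N))
    (hδ : 0 ≤ δ)
    (hH : (μH[(N : ℝ) - 1] (frontier Ω)).toReal
        = κ * (volume Ω).toReal ^ (((N : ℝ) - 1) / N) * (1 + δ))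
    (T ν : EuclideanSpace ℝ (Fin N) → EuclideanSpace ℝ (Fin N))
    (hT_bdd : ∀ᵐ x ∂(μH[(N : ℝ) - 1].restrict (frontier Ω)), ‖T x‖ ≤ R)
    (hν : ∀ᵐ x ∂(μH[(N : ℝ) - 1].restrict (frontier Ω)), ‖ν x‖ = 1)
    (hint : Integrable (fun x => ⟪T x, ν x⟫)
        (μH[(N : ℝ) - 1].restrict (frontier Ω)))
    (hflux : (N : ℝ) * (volume Ω).toReal ≤
        ∫ x, ⟪T x, ν x⟫ ∂(μH[(N : ℝ) - 1].restrict (frontier Ω))) :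
    ∫ x, |R * (1 + δ) ^ (1 / (p - 1)) - ⟪T x, ν x⟫|
        ∂(μH[(N : ℝ) - 1].restrict (frontier Ω))
      ≤ (N : ℝ) * (volume Ω).toReal * ((1 + δ) ^ (p / (p - 1)) - 1) := by
  set μ := μH[(N : ℝ) - 1].restrict (frontier Ω) with hμ
  set V := (volume Ω).toReal with hVdef
  have hV : 0 ≤ V := ENNReal.toReal_nonneg
  have hNpos : (0 : ℝ) < N := by positivity
  have hω0 : 0 < ω := by
    rw [hω]
    refine ENNReal.toReal_pos (ne_of_gt ?_) (ne_of_lt ?_)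
    · exact Metric.measure_ball_pos _ _ one_pos
    · exact measure_ball_lt_top
  have hR0 : 0 ≤ R := by rw [hR]; positivity
  have h1δ : (0 : ℝ) < 1 + δ := by linarith
  have hpe : 0 < p - 1 := by linarith
  have hone : (1 : ℝ) ≤ (1 + δ) ^ (1 / (p - 1)) := by
    apply Real.one_le_rpow (by linarith) (by positivity)
  set c := R * (1 + δ) ^ (1 / (p - 1)) with hc
  have hcR : R ≤ c := le_mul_of_one_le_right hR0 hone
  -- a.e. bound on the inner product
  have hf_le : ∀ᵐ x ∂μ, |⟪T x, ν x⟫| ≤ R := by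
    filter_upwards [hT_bdd, hν] with x hx hnx
    calc |⟪T x, ν x⟫| ≤ ‖T x‖ * ‖ν x‖ := abs_real_inner_le_norm _ _
      _ = ‖T x‖ := by rw [hnx, mul_one]
      _ ≤ R := hx
  -- key algebraic identity
  have hkey : c * (κ * V ^ (((N : ℝ) - 1) / N) * (1 + δ))
      = (N : ℝ) * V * (1 + δ) ^ (p / (p - 1)) := by
    have hRω : R * ω ^ ((1 : ℝ) / N) = V ^ ((1 : ℝ) / N) := by
      rw [hR, Real.div_rpow hV hω0.le, div_mul_cancel₀]
      exact (Real.rpow_pos_of_pos hω0 _).ne'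
    have hVV : V ^ ((1 : ℝ) / N) * V ^ (((N : ℝ) - 1) / N) = V := by
      rw [← Real.rpow_add' hV (by field_simp; exact div_ne_zero (ne_of_gt (by linarith)) hNpos.ne')]
      rw [show (1 : ℝ) / N + ((N : ℝ) - 1) / N = 1 by field_simp; ring]
      exact Real.rpow_one V
    have hδδ : (1 + δ) ^ (1 / (p - 1)) * (1 + δ) = (1 + δ) ^ (p / (p - 1)) := by
      nth_rewrite 2 [← Real.rpow_one (1 + δ)]
      rw [← Real.rpow_add h1δ]
      congr 1
      field_simp
      ring
    calc c * (κ * V ^ (((N : ℝ) - 1) / N) * (1 + δ))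
        = (N : ℝ) * ((R * ω ^ ((1 : ℝ) / N)) * V ^ (((N : ℝ) - 1) / N))
            * ((1 + δ) ^ (1 / (p - 1)) * (1 + δ)) := by rw [hc, hκ]; ring
      _ = (N : ℝ) * V * (1 + δ) ^ (p / (p - 1)) := by
            rw [hRω, hVV, hδδ]
  by_cases hfin : μH[(N : ℝ) - 1] (frontier Ω) = ⊤
  · -- infinite boundary measure: forces V = 0, R = 0, integrand 0 a.e.
    have h0 : (0 : ℝ) = κ * V ^ (((N : ℝ) - 1) / N) * (1 + δ) := by
      rw [← hH, hfin, ENNReal.toReal_top]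
    have hκ0 : 0 < κ := by rw [hκ]; positivity
    have hV0 : V = 0 := by
      have hpow : V ^ (((N : ℝ) - 1) / N) = 0 := by
        by_contra h
        have : 0 < V ^ (((N : ℝ) - 1) / N) :=
          lt_of_le_of_ne (Real.rpow_nonneg hV _) (Ne.symm h)
        nlinarith [mul_pos (mul_pos hκ0 this) h1δ]
      have hN2 : (2 : ℝ) ≤ (N : ℝ) := by exact_mod_cast hN
      have hexp : (((N : ℝ) - 1) / N) ≠ 0 :=
        (div_pos (by linarith) hNpos).ne'
      exact (Real.rpow_eq_zero hV hexp).mp hpow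
    have hR00 : R = 0 := by
      rw [hR, hV0, zero_div, Real.zero_rpow (one_div_ne_zero hNpos.ne')]
    have hzero : ∀ᵐ x ∂μ, |c - ⟪T x, ν x⟫| = 0 := by
      filter_upwards [hf_le] with x hx
      have : ⟪T x, ν x⟫ = 0 := by
        rw [hR00] at hx
        exact abs_eq_zero.mp (le_antisymm hx (abs_nonneg _))
      rw [this, hc, hR00, zero_mul, sub_zero, abs_zero]
    have : ∫ x, |c - ⟪T x, ν x⟫| ∂μ = 0 := by
      rw [integral_congr_ae hzero, integral_zero]
    rw [this, hV0]
    simp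
  · haveI : IsFiniteMeasure μ := by
      constructor
      rw [hμ, Measure.restrict_apply_univ]
      exact lt_top_iff_ne_top.mpr hfin
    have hS : (μ Set.univ).toReal = κ * V ^ (((N : ℝ) - 1) / N) * (1 + δ) := by
      rw [hμ, Measure.restrict_apply_univ]; exact hH
    have hae : ∀ᵐ x ∂μ, |c - ⟪T x, ν x⟫| = c - ⟪T x, ν x⟫ := by
      filter_upwards [hf_le] with x hx
      apply abs_of_nonneg
      have : ⟪T x, ν x⟫ ≤ R := le_trans (le_abs_self _) hx
      linarith
    calc ∫ x, |c - ⟪T x, ν x⟫| ∂μ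
        = ∫ x, c - ⟪T x, ν x⟫ ∂μ := integral_congr_ae hae
      _ = c * (μ Set.univ).toReal - ∫ x, ⟪T x, ν x⟫ ∂μ := by
          rw [integral_sub (integrable_const c) hint, integral_const, smul_eq_mul,
            mul_comm]; rfl
      _ ≤ c * (κ * V ^ (((N : ℝ) - 1) / N) * (1 + δ)) - (N : ℝ) * V := by
          rw [hS]; linarith
      _ = (N : ℝ) * V * ((1 + δ) ^ (p / (p - 1)) - 1) := by rw [hkey]; ring
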